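/- Assume φ: A → A is surjective. Let (N, α_N) →^j (K, α_K) →^f (L, α_L) be a central extension of hom-Lie-Rinehart algebras over (A, φ) with (K, α_K) α-perfect, and set P = uce^φ_A(f)(Ker(u_K)) ⊆ uce^φ_A L. An α-derivation D_L of (L, α_L) with symbol σ_D lifts to an α-derivation D_K of (K, α_K) with the same symbol σ_D satisfying f ∘ D_K = D_L ∘ f (and such a lift is unique) if and only if uce^φ_A(D_L)(P) ⊆ P; moreover in that case D_K(Ker(f)) ⊆ Ker(f). -/

import Mathlib

/-!
Choose a set-theoretic section `s` of `f`. Since `Ker f` is central, `[s x, s y]` does not depend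
on the choice of `s`, so `(a, x, y) ↦ a • [s x, s y]` gives a well-defined homomorphism
`λ : uce^φ_A L → K` with `λ ∘ uce^φ_A(f) = u_K`; it is onto because `K` is `α`-perfect, and
`f ∘ λ = u_L`. Hence `P = Ker λ`. A lift `D_K` of `D_L` satisfies `λ ∘ uce^φ_A(D_L) = D_K ∘ λ`, so
`P` is invariant. Conversely, if `Ker λ` is invariant then `uce^φ_A(D_L)` descends along `λ` to an
`α`-derivation `D_K` of `K`, which lifts `D_L` because `u_L` intertwines `uce^φ_A(D_L)` and `D_L`.
Two lifts differ by a map into the centre, which kills every `[α x, α y]`; as these span `K`, the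
lift is unique.
-/

open TensorProduct Function Set

/-- A hom-Lie-Rinehart algebra structure over `(A, φ)` on the `A`-module `L`. -/
structure HLR (R A : Type) [CommRing R] [CommRing A] [Algebra R A]
    (φ : A →ₐ[R] A) (L : Type) [AddCommGroup L] [Module R L]
    [Module A L] [IsScalarTower R A L] : Type where
  bracket : L → L → L
  add_left : ∀ x y z, bracket (x + y) z = bracket x z + bracket y z
  add_right : ∀ x y z, bracket x (y + z) = bracket x y + bracket x z
  smul_left : ∀ (r : R) (x y : L), bracket (r • x) y = r • bracket x y
  smul_right : ∀ (r : R) (x y : L), bracket x (r • y) = r • bracket x y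
  skew : ∀ x y, bracket x y = - bracket y x
  alpha : L → L
  alpha_add : ∀ x y, alpha (x + y) = alpha x + alpha y
  alpha_smulR : ∀ (r : R) (x : L), alpha (r • x) = r • alpha x
  rho : L → A → A
  rho_add_left : ∀ x y a, rho (x + y) a = rho x a + rho y a
  rho_smulR_left : ∀ (r : R) (x : L) (a : A), rho (r • x) a = r • rho x a
  rho_add_right : ∀ (x : L) (a b : A), rho x (a + b) = rho x a + rho x b
  rho_smulR_right : ∀ (x : L) (r : R) (a : A), rho x (r • a) = r • rho x a
  rho_deriv : ∀ (x : L) (a b : A), rho x (a * b) = φ a * rho x b + φ b * rho x a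
  alpha_bracket : ∀ x y, alpha (bracket x y) = bracket (alpha x) (alpha y)
  hom_jacobi : ∀ x y z, bracket (alpha x) (bracket y z)
      + bracket (alpha y) (bracket z x) + bracket (alpha z) (bracket x y) = 0
  alpha_smulA : ∀ (a : A) (x : L), alpha (a • x) = φ a • alpha x
  rho_alpha : ∀ (x : L) (a : A), rho (alpha x) (φ a) = φ (rho x a)
  rho_bracket : ∀ (x y : L) (a : A), rho (bracket x y) (φ a)
      = rho (alpha x) (rho y a) - rho (alpha y) (rho x a)
  rho_smulA : ∀ (a : A) (x : L) (b : A), rho (a • x) b = φ a * rho x b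
  leibniz : ∀ (x : L) (a : A) (y : L),
      bracket x (a • y) = φ a • bracket x y + rho x a • alpha y

section Defs

variable {R A : Type} [CommRing R] [CommRing A] [Algebra R A] {φ : A →ₐ[R] A}

/-- Homomorphism of hom-Lie-Rinehart algebras over `(A, φ)`: an `A`-linear map
preserving brackets, the twist maps and the anchors. -/
def IsHLRHom {K L : Type}
    [AddCommGroup K] [Module R K] [Module A K] [IsScalarTower R A K]
    [AddCommGroup L] [Module R L] [Module A L] [IsScalarTower R A L]
    (SK : HLR R A φ K) (SL : HLR R A φ L) (f : K → L) : Prop :=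
  (∀ x y, f (x + y) = f x + f y) ∧
  (∀ (a : A) (x : K), f (a • x) = a • f x) ∧
  (∀ x y, f (SK.bracket x y) = SL.bracket (f x) (f y)) ∧
  (∀ x, f (SK.alpha x) = SL.alpha (f x)) ∧
  (∀ (x : K) (a : A), SL.rho (f x) a = SK.rho x a)

/-- The center `Z_A(L)` of a hom-Lie-Rinehart algebra. -/
def HLR.center {L : Type}
    [AddCommGroup L] [Module R L] [Module A L] [IsScalarTower R A L]
    (S : HLR R A φ L) : Set L :=
  {x | ∀ (a : A) (z : L),
    S.bracket (a • x) z = 0 ∧ S.bracket (a • S.alpha x) z = 0 ∧ S.rho x a = 0}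

/-- `(M, i) → (K, σ)` is a central extension of `L`. -/
def IsCentralExt {M K L : Type}
    [AddCommGroup M] [Module R M] [Module A M] [IsScalarTower R A M]
    [AddCommGroup K] [Module R K] [Module A K] [IsScalarTower R A K]
    [AddCommGroup L] [Module R L] [Module A L] [IsScalarTower R A L]
    (SM : HLR R A φ M) (SK : HLR R A φ K) (SL : HLR R A φ L)
    (i : M → K) (σ : K → L) : Prop :=
  IsHLRHom SM SK i ∧ IsHLRHom SK SL σ ∧ Function.Injective i ∧
  Function.Surjective σ ∧ Set.range i = {k | σ k = 0} ∧
  {k | σ k = 0} ⊆ SK.center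

/-- `(M, i) → (K, σ)` is an `α`-central extension of `L`. -/
def IsAlphaCentralExt {M K L : Type}
    [AddCommGroup M] [Module R M] [Module A M] [IsScalarTower R A M]
    [AddCommGroup K] [Module R K] [Module A K] [IsScalarTower R A K]
    [AddCommGroup L] [Module R L] [Module A L] [IsScalarTower R A L]
    (SM : HLR R A φ M) (SK : HLR R A φ K) (SL : HLR R A φ L)
    (i : M → K) (σ : K → L) : Prop :=
  IsHLRHom SM SK i ∧ IsHLRHom SK SL σ ∧ Function.Injective i ∧
  Function.Surjective σ ∧ Set.range i = {k | σ k = 0} ∧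
  (∀ m : M, i (SM.alpha m) ∈ SK.center)

/-- A hom-Lie-Rinehart algebra is perfect if `L = {L, L}`, the `A`-submodule
generated by all brackets. -/
def HLR.IsPerfect {L : Type}
    [AddCommGroup L] [Module R L] [Module A L] [IsScalarTower R A L]
    (S : HLR R A φ L) : Prop :=
  Submodule.span A {z : L | ∃ x y, z = S.bracket x y} = ⊤

/-- A hom-Lie-Rinehart algebra is `α`-perfect if `L = {α_L(L), α_L(L)}`. -/
def HLR.IsAlphaPerfect {L : Type}
    [AddCommGroup L] [Module R L] [Module A L] [IsScalarTower R A L]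
    (S : HLR R A φ L) : Prop :=
  Submodule.span A {z : L | ∃ x y, z = S.bracket (S.alpha x) (S.alpha y)} = ⊤

/-- Universal central extension. -/
def IsUniversalCentralExt {M K L : Type}
    [AddCommGroup M] [Module R M] [Module A M] [IsScalarTower R A M]
    [AddCommGroup K] [Module R K] [Module A K] [IsScalarTower R A K]
    [AddCommGroup L] [Module R L] [Module A L] [IsScalarTower R A L]
    (SM : HLR R A φ M) (SK : HLR R A φ K) (SL : HLR R A φ L)
    (i : M → K) (σ : K → L) : Prop :=
  IsCentralExt SM SK SL i σ ∧
  ∀ (M' L' : Type)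
    [AddCommGroup M'] [Module R M'] [Module A M'] [IsScalarTower R A M']
    [AddCommGroup L'] [Module R L'] [Module A L'] [IsScalarTower R A L']
    (SM' : HLR R A φ M') (SL' : HLR R A φ L') (j : M' → L') (τ : L' → L),
    IsCentralExt SM' SL' SL j τ →
    ∃! h : K → L', IsHLRHom SK SL' h ∧ ∀ x, τ (h x) = σ x

/-- Universal `α`-central extension. -/
def IsUniversalAlphaCentralExt {M K L : Type}
    [AddCommGroup M] [Module R M] [Module A M] [IsScalarTower R A M]
    [AddCommGroup K] [Module R K] [Module A K] [IsScalarTower R A K]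
    [AddCommGroup L] [Module R L] [Module A L] [IsScalarTower R A L]
    (SM : HLR R A φ M) (SK : HLR R A φ K) (SL : HLR R A φ L)
    (i : M → K) (σ : K → L) : Prop :=
  IsCentralExt SM SK SL i σ ∧
  ∀ (M' L' : Type)
    [AddCommGroup M'] [Module R M'] [Module A M'] [IsScalarTower R A M']
    [AddCommGroup L'] [Module R L'] [Module A L'] [IsScalarTower R A L']
    (SM' : HLR R A φ M') (SL' : HLR R A φ L') (j : M' → L') (τ : L' → L),
    IsAlphaCentralExt SM' SL' SL j τ →
    ∃! h : K → L', IsHLRHom SK SL' h ∧ ∀ x, τ (h x) = σ x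

end Defs

section UceDefs

variable {R A : Type} [CommRing R] [CommRing A] [Algebra R A] (φ : A →ₐ[R] A)
variable {L : Type} [AddCommGroup L] [Module R L] [Module A L] [IsScalarTower R A L]

/-- The `A`-submodule `M^φ_A L` of `A ⊗ L ⊗ L` of defining relations of `uce^φ_A L`. -/
def uceRel (S : HLR R A φ L) : Submodule A (A ⊗[R] (L ⊗[R] L)) :=
  Submodule.span A
    ({t | ∃ (a : A) (x : L), t = a ⊗ₜ[R] (x ⊗ₜ[R] x)} ∪
     {t | ∃ (a : A) (x y : L), t = a ⊗ₜ[R] (x ⊗ₜ[R] y) + a ⊗ₜ[R] (y ⊗ₜ[R] x)} ∪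
     {t | ∃ (a : A) (x y z : L), t =
        a ⊗ₜ[R] (S.alpha x ⊗ₜ[R] S.bracket y z)
          + a ⊗ₜ[R] (S.alpha y ⊗ₜ[R] S.bracket z x)
          + a ⊗ₜ[R] (S.alpha z ⊗ₜ[R] S.bracket x y)} ∪
     {t | ∃ (a : A) (x y x' y' : L), t =
        φ a ⊗ₜ[R] (S.bracket x y ⊗ₜ[R] S.bracket x' y')
          + S.rho (S.bracket x y) a ⊗ₜ[R] (S.alpha x' ⊗ₜ[R] S.alpha y')
          - (1 : A) ⊗ₜ[R] (S.bracket x y ⊗ₜ[R] (a • S.bracket x' y'))})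

/-- The underlying `A`-module of `uce^φ_A L`. -/
abbrev UCE (S : HLR R A φ L) : Type := (A ⊗[R] (L ⊗[R] L)) ⧸ uceRel φ S

/-- The coset `(a, x, y)` in `uce^φ_A L`. -/
noncomputable def uceMk (S : HLR R A φ L) (a : A) (x y : L) : UCE φ S :=
  Submodule.Quotient.mk (a ⊗ₜ[R] (x ⊗ₜ[R] y))

/-- `U` is the hom-Lie-Rinehart structure of `uce^φ_A L`: its bracket, twist map and anchor
are given by the defining formulas on cosets. -/
def IsUceStructure (S : HLR R A φ L) (U : HLR R A φ (UCE φ S)) : Prop :=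
  (∀ (a₁ a₂ : A) (x₁ y₁ x₂ y₂ : L),
    U.bracket (uceMk φ S a₁ x₁ y₁) (uceMk φ S a₂ x₂ y₂) =
      uceMk φ S (φ (a₁ * a₂)) (S.bracket x₁ y₁) (S.bracket x₂ y₂)
      + uceMk φ S (φ a₁ * S.rho (S.bracket x₁ y₁) a₂) (S.alpha x₂) (S.alpha y₂)
      - uceMk φ S (φ a₂ * S.rho (S.bracket x₂ y₂) a₁) (S.alpha x₁) (S.alpha y₁)) ∧
  (∀ (a : A) (x y : L),
    U.alpha (uceMk φ S a x y) = uceMk φ S (φ a) (S.alpha x) (S.alpha y)) ∧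
  (∀ (a b : A) (x y : L),
    U.rho (uceMk φ S a x y) b = φ a * S.rho (S.bracket x y) b)

/-- `u` is the canonical map `u_L : uce^φ_A L → L`, `(a,x,y) ↦ a • [x,y]`. -/
def IsUceMap (S : HLR R A φ L) (u : UCE φ S → L) : Prop :=
  (∀ ξ η, u (ξ + η) = u ξ + u η) ∧
  (∀ (a : A) (ξ : UCE φ S), u (a • ξ) = a • u ξ) ∧
  (∀ (a : A) (x y : L), u (uceMk φ S a x y) = a • S.bracket x y)

end UceDefs

section MoreDefs

variable {R A : Type} [CommRing R] [CommRing A] [Algebra R A] (φ : A →ₐ[R] A)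

/-- `F` is the homomorphism `uce^φ_A(f)` induced by `f` on universal central extensions. -/
def IsUceFunctorMap {K L : Type}
    [AddCommGroup K] [Module R K] [Module A K] [IsScalarTower R A K]
    [AddCommGroup L] [Module R L] [Module A L] [IsScalarTower R A L]
    (SK : HLR R A φ K) (SL : HLR R A φ L)
    (UK : HLR R A φ (UCE φ SK)) (UL : HLR R A φ (UCE φ SL))
    (f : K → L) (F : UCE φ SK → UCE φ SL) : Prop :=
  IsHLRHom UK UL F ∧
  ∀ (a : A) (x y : K), F (uceMk φ SK a x y) = uceMk φ SL a (f x) (f y)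

/-- `D` is an `α`-derivation of `(L, α_L)` with symbol `σD`. -/
def IsAlphaDeriv {L : Type}
    [AddCommGroup L] [Module R L] [Module A L] [IsScalarTower R A L]
    (S : HLR R A φ L) (D : L → L) (σD : A → A) : Prop :=
  (∀ x y, D (x + y) = D x + D y) ∧
  (∀ (r : R) (x : L), D (r • x) = r • D x) ∧
  (∀ a b, σD (a + b) = σD a + σD b) ∧
  (∀ (r : R) (a : A), σD (r • a) = r • σD a) ∧
  (∀ a b, σD (a * b) = φ a * σD b + φ b * σD a) ∧
  (∀ x, D (S.alpha x) = S.alpha (D x)) ∧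
  (∀ x y, D (S.bracket x y) = S.bracket (D x) (S.alpha y) + S.bracket (S.alpha x) (D y)) ∧
  (∀ a, σD (φ a) = φ (σD a)) ∧
  (∀ (a : A) (x : L), D (a • x) = φ a • D x + σD a • S.alpha x) ∧
  (∀ (x : L) (a : A), σD (S.rho x a) = S.rho (S.alpha x) (σD a) + S.rho (D x) (φ a))

/-- A quasi hom-action of `(L, α_L)` on `(M, α_M)`. -/
def IsQuasiHomAction {L M : Type}
    [AddCommGroup L] [Module R L] [Module A L] [IsScalarTower R A L]
    [AddCommGroup M] [Module R M] [Module A M] [IsScalarTower R A M]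
    (SL : HLR R A φ L) (SM : HLR R A φ M) (act : L → M → M) : Prop :=
  (∀ (x : L) (a : A) (m : M),
      act x (a • m) = φ a • act x m + SL.rho x a • SM.alpha m) ∧
  (∀ (x y : L) (m : M),
      act (SL.bracket x y) (SM.alpha m)
        = act (SL.alpha x) (act y m) - act (SL.alpha y) (act x m)) ∧
  (∀ (x : L) (m n : M),
      act (SL.alpha x) (SM.bracket m n)
        = SM.bracket (act x m) (SM.alpha n) + SM.bracket (SM.alpha m) (act x n)) ∧
  (∀ (x : L) (m : M) (a : A),
      SM.rho (act x m) (φ a)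
        = SL.rho (SL.alpha x) (SM.rho m a) - SM.rho (SM.alpha m) (SL.rho x a)) ∧
  (∀ (x : L) (m : M), SM.alpha (act x m) = act (SL.alpha x) (SM.alpha m))

/-- Compatibility of two quasi hom-actions on each other. -/
def AreCompatibleActions {L M : Type}
    [AddCommGroup L] [Module R L] [Module A L] [IsScalarTower R A L]
    [AddCommGroup M] [Module R M] [Module A M] [IsScalarTower R A M]
    (SL : HLR R A φ L) (SM : HLR R A φ M)
    (actLM : L → M → M) (actML : M → L → L) : Prop :=
  (∀ (x : L) (m : M) (a : A), SM.rho (actLM x m) a = - SL.rho (actML m x) a) ∧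
  (∀ (m : M) (x : L) (n : M), actLM (actML m x) n = SM.bracket n (actLM x m)) ∧
  (∀ (x : L) (m : M) (y : L), actML (actLM x m) y = SL.bracket y (actML m x))

end MoreDefs

section StarDefs

variable {R A : Type} [CommRing R] [CommRing A] [Algebra R A] (φ : A →ₐ[R] A)
variable {L M : Type}
  [AddCommGroup L] [Module R L] [Module A L] [IsScalarTower R A L]
  [AddCommGroup M] [Module R M] [Module A M] [IsScalarTower R A M]

/-- The `A`-submodule of defining relations of the non-abelian tensor product `L ∗ M`,
inside the free `A`-module on the symbols `x ∗ m`. -/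
noncomputable def starRel (SL : HLR R A φ L) (SM : HLR R A φ M)
    (actLM : L → M → M) (actML : M → L → L) : Submodule A ((L × M) →₀ A) :=
  Submodule.span A
    ({t | ∃ (x y : L) (m : M), t =
        Finsupp.single (x + y, m) (1 : A) - Finsupp.single (x, m) 1
          - Finsupp.single (y, m) 1} ∪
     {t | ∃ (r : R) (x : L) (m : M), t =
        Finsupp.single (r • x, m) (1 : A) - r • Finsupp.single (x, m) (1 : A)} ∪
     {t | ∃ (x : L) (m n : M), t =
        Finsupp.single (x, m + n) (1 : A) - Finsupp.single (x, m) 1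
          - Finsupp.single (x, n) 1} ∪
     {t | ∃ (r : R) (x : L) (m : M), t =
        Finsupp.single (x, r • m) (1 : A) - r • Finsupp.single (x, m) (1 : A)} ∪
     {t | ∃ (x y : L) (m : M), t =
        Finsupp.single (SL.bracket x y, SM.alpha m) (1 : A)
          - Finsupp.single (SL.alpha x, actLM y m) 1
          + Finsupp.single (SL.alpha y, actLM x m) 1} ∪
     {t | ∃ (x : L) (m n : M), t =
        Finsupp.single (SL.alpha x, SM.bracket m n) (1 : A)
          - Finsupp.single (actML n x, SM.alpha m) 1
          + Finsupp.single (actML m x, SM.alpha n) 1} ∪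
     {t | ∃ (a b : A) (x y : L) (m n : M), t =
        Finsupp.single (a • actML m x, b • actLM y n) (1 : A)
          + Finsupp.single (b • actML n y, a • actLM x m) 1} ∪
     {t | ∃ (a b : A) (x y : L) (m n : M), t =
        Finsupp.single (a • actML m x, b • actLM y n) (1 : A)
          - φ (a * b) • Finsupp.single (actML m x, actLM y n) (1 : A)
          + (φ a * SM.rho (actLM x m) b) • Finsupp.single (SL.alpha y, SM.alpha n) (1 : A)
          - (φ b * SM.rho (actLM y n) a) • Finsupp.single (SL.alpha x, SM.alpha m) (1 : A)})

/-- The underlying `A`-module of the non-abelian tensor product `L ∗ M`. -/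
abbrev StarMod (SL : HLR R A φ L) (SM : HLR R A φ M)
    (actLM : L → M → M) (actML : M → L → L) : Type :=
  ((L × M) →₀ A) ⧸ starRel φ SL SM actLM actML

/-- The generator `x ∗ m` of `L ∗ M`. -/
noncomputable def starMk (SL : HLR R A φ L) (SM : HLR R A φ M)
    (actLM : L → M → M) (actML : M → L → L) (x : L) (m : M) :
    StarMod φ SL SM actLM actML :=
  Submodule.Quotient.mk (Finsupp.single (x, m) (1 : A))

/-- `U` is the hom-Lie-Rinehart structure of the non-abelian tensor product `L ∗ M`. -/
def IsStarStructure (SL : HLR R A φ L) (SM : HLR R A φ M)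
    (actLM : L → M → M) (actML : M → L → L)
    (U : HLR R A φ (StarMod φ SL SM actLM actML)) : Prop :=
  (∀ (x : L) (m : M),
      U.alpha (starMk φ SL SM actLM actML x m)
        = starMk φ SL SM actLM actML (SL.alpha x) (SM.alpha m)) ∧
  (∀ (a b : A) (x y : L) (m n : M),
      U.bracket (a • starMk φ SL SM actLM actML x m)
          (b • starMk φ SL SM actLM actML y n)
        = - starMk φ SL SM actLM actML (a • actML m x) (b • actLM y n)) ∧
  (∀ (x : L) (m : M) (a : A),
      U.rho (starMk φ SL SM actLM actML x m) a = SM.rho (actLM x m) a)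

/-- A hom-Lie-Rinehart pairing of `(L, α_L)` and `(M, α_M)` into `(N, α_N)`. -/
def IsHLRPairing {N : Type}
    [AddCommGroup N] [Module R N] [Module A N] [IsScalarTower R A N]
    (SL : HLR R A φ L) (SM : HLR R A φ M) (SN : HLR R A φ N)
    (actLM : L → M → M) (actML : M → L → L) (f : L → M → N) : Prop :=
  (∀ (x y : L) (m : M), f (x + y) m = f x m + f y m) ∧
  (∀ (r : R) (x : L) (m : M), f (r • x) m = r • f x m) ∧
  (∀ (x : L) (m n : M), f x (m + n) = f x m + f x n) ∧
  (∀ (r : R) (x : L) (m : M), f x (r • m) = r • f x m) ∧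
  (∀ (x : L) (m : M) (a : A), SN.rho (f x m) a = SM.rho (actLM x m) a) ∧
  (∀ (x y : L) (m : M),
      f (SL.bracket x y) (SM.alpha m)
        = f (SL.alpha x) (actLM y m) - f (SL.alpha y) (actLM x m)) ∧
  (∀ (x : L) (m n : M),
      f (SL.alpha x) (SM.bracket m n)
        = f (actML n x) (SM.alpha m) - f (actML m x) (SM.alpha n)) ∧
  (∀ (x : L) (m : M), f (SL.alpha x) (SM.alpha m) = SN.alpha (f x m)) ∧
  (∀ (a b : A) (x y : L) (m n : M),
      f (a • actML m x) (b • actLM y n)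
        = - (φ (a * b) • SN.bracket (f x m) (f y n))
          - (φ a * SN.rho (f x m) b) • SN.alpha (f y n)
          + (φ b * SN.rho (f y n) a) • SN.alpha (f x m))

end StarDefs

namespace HLR

variable {R A : Type} [CommRing R] [CommRing A] [Algebra R A] {φ : A →ₐ[R] A}
  {L : Type} [AddCommGroup L] [Module R L] [Module A L] [IsScalarTower R A L]
  (S : HLR R A φ L)

theorem bracket_sub_left (x y z : L) :
    S.bracket (x - y) z = S.bracket x z - S.bracket y z :=
  (AddMonoidHom.mk' (S.bracket · z) (fun x y => S.add_left x y z)).map_sub x y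

theorem bracket_sub_right (x y z : L) :
    S.bracket x (y - z) = S.bracket x y - S.bracket x z :=
  (AddMonoidHom.mk' (S.bracket x) (S.add_right x)).map_sub y z

theorem bracket_smul_smul (a b : A) (p q : L) :
    S.bracket (a • p) (b • q) = φ (a * b) • S.bracket p q
      + (φ a * S.rho p b) • S.alpha q - (φ b * S.rho q a) • S.alpha p := by
  have hleft : S.bracket (a • p) q = φ a • S.bracket p q - S.rho q a • S.alpha p := by
    rw [S.skew (a • p) q, S.leibniz q a p, S.skew q p, neg_add, smul_neg, neg_neg,
      ← sub_eq_add_neg]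
  rw [S.leibniz (a • p) b q, hleft, S.rho_smulA a p b, map_mul, smul_sub, smul_smul,
    smul_smul, mul_smul, smul_smul, mul_comm (φ b) (φ a)]
  abel

variable {S}

theorem bracket_eq_zero_of_mem_center_left {c : L} (hc : c ∈ S.center) (z : L) :
    S.bracket c z = 0 := by
  simpa only [one_smul] using (hc 1 z).1

theorem bracket_eq_zero_of_mem_center_right {c : L} (hc : c ∈ S.center) (z : L) :
    S.bracket z c = 0 := by
  rw [S.skew, bracket_eq_zero_of_mem_center_left hc, neg_zero]

end HLR

section Homomorphisms

variable {R A : Type} [CommRing R] [CommRing A] [Algebra R A] {φ : A →ₐ[R] A}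
  {K L : Type} [AddCommGroup K] [Module R K] [Module A K] [IsScalarTower R A K]
  [AddCommGroup L] [Module R L] [Module A L] [IsScalarTower R A L]
  {SK : HLR R A φ K} {SL : HLR R A φ L} {f : K → L}

theorem IsHLRHom.map_smul (hf : IsHLRHom SK SL f) (a : A) (x : K) : f (a • x) = a • f x :=
  hf.2.1 a x

theorem IsHLRHom.map_smul_of_tower (hf : IsHLRHom SK SL f) (r : R) (x : K) :
    f (r • x) = r • f x := by
  rw [← algebraMap_smul A r x, hf.map_smul, algebraMap_smul]

theorem IsHLRHom.map_bracket (hf : IsHLRHom SK SL f) (x y : K) :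
    f (SK.bracket x y) = SL.bracket (f x) (f y) :=
  hf.2.2.1 x y

theorem IsHLRHom.map_alpha (hf : IsHLRHom SK SL f) (x : K) : f (SK.alpha x) = SL.alpha (f x) :=
  hf.2.2.2.1 x

theorem IsHLRHom.map_sub (hf : IsHLRHom SK SL f) (x y : K) : f (x - y) = f x - f y :=
  (AddMonoidHom.mk' f hf.1).map_sub x y

theorem IsHLRHom.bracket_eq_of_map_eq (hf : IsHLRHom SK SL f)
    (hcent : {k | f k = 0} ⊆ SK.center) {x x' y y' : K} (hx : f x = f x') (hy : f y = f y') :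
    SK.bracket x y = SK.bracket x' y' := by
  have hx0 : x - x' ∈ SK.center := hcent (show f (x - x') = 0 by rw [hf.map_sub, hx, sub_self])
  have hy0 : y - y' ∈ SK.center := hcent (show f (y - y') = 0 by rw [hf.map_sub, hy, sub_self])
  calc SK.bracket x y = SK.bracket x' y := by
        rw [← sub_eq_zero, ← SK.bracket_sub_left, HLR.bracket_eq_zero_of_mem_center_left hx0]
    _ = SK.bracket x' y' := by
        rw [← sub_eq_zero, ← SK.bracket_sub_right, HLR.bracket_eq_zero_of_mem_center_right hy0]

end Homomorphisms

section AlphaDerivations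

variable {R A : Type} [CommRing R] [CommRing A] [Algebra R A] {φ : A →ₐ[R] A}
  {K : Type} [AddCommGroup K] [Module R K] [Module A K] [IsScalarTower R A K]
  {SK : HLR R A φ K} {σD : A → A}

theorem IsAlphaDeriv.map_zero {D : K → K} (hD : IsAlphaDeriv φ SK D σD) : D 0 = 0 :=
  (AddMonoidHom.mk' D hD.1).map_zero

theorem IsAlphaDeriv.map_sub {D : K → K} (hD : IsAlphaDeriv φ SK D σD) (x y : K) :
    D (x - y) = D x - D y :=
  (AddMonoidHom.mk' D hD.1).map_sub x y

theorem IsAlphaDeriv.map_bracket {D : K → K} (hD : IsAlphaDeriv φ SK D σD) (x y : K) :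
    D (SK.bracket x y) = SK.bracket (D x) (SK.alpha y) + SK.bracket (SK.alpha x) (D y) :=
  hD.2.2.2.2.2.2.1 x y

theorem IsAlphaDeriv.map_smul {D : K → K} (hD : IsAlphaDeriv φ SK D σD) (a : A) (x : K) :
    D (a • x) = φ a • D x + σD a • SK.alpha x :=
  hD.2.2.2.2.2.2.2.2.1 a x

theorem IsAlphaDeriv.exists_descend {M : Type}
    [AddCommGroup M] [Module R M] [Module A M] [IsScalarTower R A M]
    {SM : HLR R A φ M} {g : M → K} (hg : IsHLRHom SM SK g) (hgs : Surjective g)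
    {DM : M → M} (hDM : IsAlphaDeriv φ SM DM σD) (hker : ∀ ζ, g ζ = 0 → g (DM ζ) = 0) :
    ∃ DK : K → K, IsAlphaDeriv φ SK DK σD ∧ ∀ ζ, DK (g ζ) = g (DM ζ) := by
  set t := surjInv hgs
  have hdesc : ∀ ζ, g (DM (t (g ζ))) = g (DM ζ) := by
    intro ζ
    have h := hker (t (g ζ) - ζ) (by rw [hg.map_sub, surjInv_eq hgs, sub_self])
    rwa [hDM.map_sub, hg.map_sub, sub_eq_zero] at h
  have g_smulR := hg.map_smul_of_tower
  obtain ⟨g_add, g_smul, g_br, g_al, g_rho⟩ := hg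
  obtain ⟨DM_add, DM_smulR, σ_add, σ_smulR, σ_mul, DM_al, DM_br, σ_φ, DM_smulA, DM_rho⟩ := hDM
  refine ⟨fun k => g (DM (t k)), ⟨?_, ?_, σ_add, σ_smulR, σ_mul, ?_, ?_, σ_φ, ?_, ?_⟩, hdesc⟩
  all_goals simp only [hgs.forall]
  · intro ζ η
    simp only [← g_add, hdesc, DM_add]
  · intro r ζ
    simp only [← g_smulR, hdesc, DM_smulR]
  · intro ζ
    simp only [← g_al, hdesc, DM_al]
  · intro ζ η
    simp only [← g_br, ← g_al, ← g_add, hdesc, DM_br]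
  · intro a ζ
    simp only [← g_smul, ← g_al, ← g_add, hdesc, DM_smulA]
  · intro ζ a
    simp only [g_rho, ← g_al, hdesc, DM_rho]

theorem IsAlphaDeriv.eq_of_sub_mem_center (hap : SK.IsAlphaPerfect) {D D' : K → K}
    (hD : IsAlphaDeriv φ SK D σD) (hD' : IsAlphaDeriv φ SK D' σD)
    (hc : ∀ k, D k - D' k ∈ SK.center) : D = D' := by
  funext k
  have hk : k ∈ Submodule.span A {z | ∃ x y, z = SK.bracket (SK.alpha x) (SK.alpha y)} := by
    rw [hap]; exact Submodule.mem_top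
  induction hk using Submodule.span_induction with
  | mem z hz =>
    obtain ⟨x, y, rfl⟩ := hz
    have hx : SK.bracket (D (SK.alpha x)) (SK.alpha (SK.alpha y))
        = SK.bracket (D' (SK.alpha x)) (SK.alpha (SK.alpha y)) := by
      rw [← sub_eq_zero, ← SK.bracket_sub_left,
        HLR.bracket_eq_zero_of_mem_center_left (hc _)]
    have hy : SK.bracket (SK.alpha (SK.alpha x)) (D (SK.alpha y))
        = SK.bracket (SK.alpha (SK.alpha x)) (D' (SK.alpha y)) := by
      rw [← sub_eq_zero, ← SK.bracket_sub_right,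
        HLR.bracket_eq_zero_of_mem_center_right (hc _)]
    rw [hD.map_bracket, hD'.map_bracket, hx, hy]
  | zero => rw [hD.map_zero, hD'.map_zero]
  | add x y _ _ hx hy => rw [hD.1, hD'.1, hx, hy]
  | smul a x _ hx => rw [hD.map_smul, hD'.map_smul, hx]

end AlphaDerivations

section UniversalCentralExtension

variable {R A : Type} [CommRing R] [CommRing A] [Algebra R A] {φ : A →ₐ[R] A}
  {L : Type} [AddCommGroup L] [Module R L] [Module A L] [IsScalarTower R A L]
  {S : HLR R A φ L}

theorem uceMk_self (a : A) (x : L) : uceMk φ S a x x = 0 :=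
  (Submodule.Quotient.mk_eq_zero _).mpr
    (Submodule.subset_span (Or.inl (Or.inl (Or.inl ⟨a, x, rfl⟩))))

theorem UCE.induction_on {p : UCE φ S → Prop} (ζ : UCE φ S) (zero : p 0)
    (mk : ∀ a x y, p (uceMk φ S a x y)) (add : ∀ ζ η, p ζ → p η → p (ζ + η)) : p ζ := by
  obtain ⟨t, rfl⟩ := Submodule.Quotient.mk_surjective _ ζ
  induction t using TensorProduct.induction_on with
  | zero => exact zero
  | tmul a m =>
    induction m using TensorProduct.induction_on with
    | zero => rw [tmul_zero]; exact zero
    | tmul x y => exact mk a x y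
    | add m n hm hn => rw [tmul_add, Submodule.Quotient.mk_add]; exact add _ _ hm hn
  | add s t hs ht => rw [Submodule.Quotient.mk_add]; exact add _ _ hs ht

theorem UCE.eq_of_additive {X : Type} [AddCommGroup X] {g h : UCE φ S → X}
    (hg : ∀ ζ η, g (ζ + η) = g ζ + g η) (hh : ∀ ζ η, h (ζ + η) = h ζ + h η)
    (hmk : ∀ a x y, g (uceMk φ S a x y) = h (uceMk φ S a x y)) (ζ : UCE φ S) : g ζ = h ζ :=
  have hg0 : g 0 = 0 := (AddMonoidHom.mk' g hg).map_zero
  have hh0 : h 0 = 0 := (AddMonoidHom.mk' h hh).map_zero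
  UCE.induction_on (p := fun ζ => g ζ = h ζ) ζ (by rw [hg0, hh0]) hmk
    (fun ζ η hζ hη => by rw [hg, hh, hζ, hη])

theorem IsUceMap.bracket_self {u : UCE φ S → L} (hu : IsUceMap φ S u) (x : L) :
    S.bracket x x = 0 := by
  have h0 : u 0 = 0 := (AddMonoidHom.mk' u hu.1).map_zero
  have h := hu.2.2 1 x x
  rwa [uceMk_self, h0, one_smul, eq_comm] at h

theorem IsUceMap.semiconj_deriv {u : UCE φ S → L} (hu : IsUceMap φ S u) {D : L → L} {σD : A → A}
    (hD : IsAlphaDeriv φ S D σD) {Du : UCE φ S → UCE φ S}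
    (hDu_add : ∀ ζ η, Du (ζ + η) = Du ζ + Du η)
    (hDu : ∀ a x y, Du (uceMk φ S a x y) = uceMk φ S (σD a) (S.alpha x) (S.alpha y)
      + uceMk φ S (φ a) (D x) (S.alpha y) + uceMk φ S (φ a) (S.alpha x) (D y))
    : Semiconj u Du D := by
  obtain ⟨u_add, -, u_mk⟩ := hu
  intro ζ
  refine UCE.eq_of_additive (g := fun ζ => u (Du ζ)) (h := fun ζ => D (u ζ))
    (fun ζ η => by simp only [hDu_add, u_add])
    (fun ζ η => by simp only [u_add, hD.1]) (fun a x y => ?_) ζ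
  rw [hDu, u_add, u_add, u_mk, u_mk, u_mk, u_mk, hD.map_smul, hD.map_bracket, S.alpha_bracket,
    smul_add]
  abel

end UniversalCentralExtension

section CentralExtension

variable {R A : Type} [CommRing R] [CommRing A] [Algebra R A] {φ : A →ₐ[R] A}
  {K L : Type} [AddCommGroup K] [Module R K] [Module A K] [IsScalarTower R A K]
  [AddCommGroup L] [Module R L] [Module A L] [IsScalarTower R A L]
  {SK : HLR R A φ K} {SL : HLR R A φ L} {f : K → L}

abbrev IsUceLift (SK : HLR R A φ K) (SL : HLR R A φ L) (f : K → L) (lam : UCE φ SL → K) :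
    Prop :=
  ∀ (a : A) (k k' : K), lam (uceMk φ SL a (f k) (f k')) = a • SK.bracket k k'

theorem exists_isUceLift (hf : IsHLRHom SK SL f) (hsurj : Surjective f)
    (hcent : {k | f k = 0} ⊆ SK.center) (hself : ∀ k, SK.bracket k k = 0) :
    ∃ lam : UCE φ SL →ₗ[A] K, IsUceLift SK SL f lam := by
  set s := surjInv hsurj
  have hs : ∀ k k', SK.bracket (s (f k)) (s (f k')) = SK.bracket k k' := fun k k' =>
    hf.bracket_eq_of_map_eq hcent (surjInv_eq hsurj _) (surjInv_eq hsurj _)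
  have f_smulR := hf.map_smul_of_tower
  obtain ⟨f_add, f_smul, f_br, f_al, f_rho⟩ := hf
  let B : L →ₗ[R] L →ₗ[R] K := LinearMap.mk₂ R (fun x y => SK.bracket (s x) (s y))
    (by simp only [hsurj.forall, ← f_add, hs, SK.add_left, implies_true])
    (by simp only [hsurj.forall, ← f_smulR, hs, SK.smul_left, implies_true])
    (by simp only [hsurj.forall, ← f_add, hs, SK.add_right, implies_true])
    (by simp only [hsurj.forall, ← f_smulR, hs, SK.smul_right, implies_true])
  let lam₀ : A ⊗[R] (L ⊗[R] L) →ₗ[A] K := LinearMap.liftBaseChange A (TensorProduct.lift B)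
  have lam₀_tmul : ∀ (a : A) (k k' : K),
      lam₀ (a ⊗ₜ[R] (f k ⊗ₜ[R] f k')) = a • SK.bracket k k' := by
    intro a k k'
    simp [lam₀, B, hs]
  have hrel : uceRel φ SL ≤ LinearMap.ker lam₀ := by
    rw [uceRel, Submodule.span_le]
    rintro t (((⟨a, x, rfl⟩ | ⟨a, x, y, rfl⟩) | ⟨a, x, y, z, rfl⟩) | ⟨a, x, y, x', y', rfl⟩)
    all_goals simp only [SetLike.mem_coe, LinearMap.mem_ker, map_add, map_sub]
    · obtain ⟨x, rfl⟩ := hsurj x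
      rw [lam₀_tmul, hself, smul_zero]
    · obtain ⟨x, rfl⟩ := hsurj x
      obtain ⟨y, rfl⟩ := hsurj y
      rw [lam₀_tmul, lam₀_tmul, SK.skew y x, smul_neg, add_neg_cancel]
    · obtain ⟨x, rfl⟩ := hsurj x
      obtain ⟨y, rfl⟩ := hsurj y
      obtain ⟨z, rfl⟩ := hsurj z
      simp only [← f_al, ← f_br, lam₀_tmul, ← smul_add, SK.hom_jacobi, smul_zero]
    · obtain ⟨x, rfl⟩ := hsurj x
      obtain ⟨y, rfl⟩ := hsurj y
      obtain ⟨x', rfl⟩ := hsurj x'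
      obtain ⟨y', rfl⟩ := hsurj y'
      simp only [← f_al, ← f_br, ← f_smul, f_rho, lam₀_tmul, one_smul, SK.leibniz,
        SK.alpha_bracket]
      abel
  exact ⟨Submodule.liftQ _ lam₀ hrel, fun a k k' => lam₀_tmul a k k'⟩

theorem IsUceLift.map_bracket (hf : IsHLRHom SK SL f) (hsurj : Surjective f)
    {UL : HLR R A φ (UCE φ SL)} (hUL : IsUceStructure φ SL UL) {lam : UCE φ SL →ₗ[A] K}
    (hlam : IsUceLift SK SL f lam) (ζ η : UCE φ SL) :
    lam (UL.bracket ζ η) = SK.bracket (lam ζ) (lam η) := by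
  refine UCE.eq_of_additive (g := fun ζ => lam (UL.bracket ζ η))
    (h := fun ζ => SK.bracket (lam ζ) (lam η))
    (fun _ _ => by simp only [UL.add_left, map_add])
    (fun _ _ => by simp only [map_add, SK.add_left]) (fun a x y => ?_) ζ
  refine UCE.eq_of_additive (g := fun η => lam (UL.bracket (uceMk φ SL a x y) η))
    (h := fun η => SK.bracket (lam (uceMk φ SL a x y)) (lam η))
    (fun _ _ => by simp only [UL.add_right, map_add])
    (fun _ _ => by simp only [map_add, SK.add_right]) (fun a' x' y' => ?_) η
  obtain ⟨x, rfl⟩ := hsurj x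
  obtain ⟨y, rfl⟩ := hsurj y
  obtain ⟨x', rfl⟩ := hsurj x'
  obtain ⟨y', rfl⟩ := hsurj y'
  simp only [hUL.1, ← hf.map_bracket, ← hf.map_alpha, hf.2.2.2.2, map_sub, map_add, hlam,
    SK.bracket_smul_smul, SK.alpha_bracket]

theorem IsUceLift.isHLRHom (hf : IsHLRHom SK SL f) (hsurj : Surjective f)
    {UL : HLR R A φ (UCE φ SL)} (hUL : IsUceStructure φ SL UL) {lam : UCE φ SL →ₗ[A] K}
    (hlam : IsUceLift SK SL f lam) : IsHLRHom UL SK lam := by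
  refine ⟨map_add lam, map_smul lam, hlam.map_bracket hf hsurj hUL, fun ζ => ?_, fun ζ b => ?_⟩
  · refine UCE.eq_of_additive (g := fun ζ => lam (UL.alpha ζ)) (h := fun ζ => SK.alpha (lam ζ))
      (fun _ _ => by simp only [UL.alpha_add, map_add])
      (fun _ _ => by simp only [map_add, SK.alpha_add]) (fun a x y => ?_) ζ
    obtain ⟨x, rfl⟩ := hsurj x
    obtain ⟨y, rfl⟩ := hsurj y
    simp only [hUL.2.1, ← hf.map_alpha, hlam, SK.alpha_smulA, SK.alpha_bracket]
  · refine UCE.eq_of_additive (g := fun ζ => SK.rho (lam ζ) b) (h := fun ζ => UL.rho ζ b)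
      (fun _ _ => by simp only [map_add, SK.rho_add_left])
      (fun _ _ => by simp only [UL.rho_add_left]) (fun a x y => ?_) ζ
    obtain ⟨x, rfl⟩ := hsurj x
    obtain ⟨y, rfl⟩ := hsurj y
    simp only [hUL.2.2, hlam, SK.rho_smulA, ← hf.map_bracket, hf.2.2.2.2]

theorem IsUceLift.surjective (hap : SK.IsAlphaPerfect) {lam : UCE φ SL →ₗ[A] K}
    (hlam : IsUceLift SK SL f lam) : Surjective lam := by
  rw [← LinearMap.range_eq_top, eq_top_iff, ← hap, Submodule.span_le]
  rintro _ ⟨x, y, rfl⟩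
  exact ⟨uceMk φ SL 1 (f (SK.alpha x)) (f (SK.alpha y)), by rw [hlam, one_smul]⟩

theorem IsUceLift.isUceMap_comp (hf : IsHLRHom SK SL f) (hsurj : Surjective f)
    {lam : UCE φ SL →ₗ[A] K} (hlam : IsUceLift SK SL f lam) : IsUceMap φ SL (f ∘ lam) := by
  refine ⟨fun ζ η => by simp only [comp_apply, map_add, hf.1],
    fun a ζ => by simp only [comp_apply, map_smul, hf.map_smul], fun a x y => ?_⟩
  obtain ⟨x, rfl⟩ := hsurj x
  obtain ⟨y, rfl⟩ := hsurj y
  rw [comp_apply, hlam, hf.map_smul, hf.map_bracket]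

theorem IsUceLift.comp_uceFunctorMap_apply {UK : HLR R A φ (UCE φ SK)} {UL : HLR R A φ (UCE φ SL)}
    {F : UCE φ SK → UCE φ SL} (hF : IsUceFunctorMap φ SK SL UK UL f F) {uK : UCE φ SK → K}
    (huK : IsUceMap φ SK uK) {lam : UCE φ SL →ₗ[A] K} (hlam : IsUceLift SK SL f lam)
    (ξ : UCE φ SK) : lam (F ξ) = uK ξ :=
  UCE.eq_of_additive (g := fun ξ => lam (F ξ)) (fun _ _ => by simp only [hF.1.1, map_add])
    huK.1 (fun a x y => by rw [hF.2, hlam, huK.2.2]) ξ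

theorem IsUceFunctorMap.surjective {UK : HLR R A φ (UCE φ SK)} {UL : HLR R A φ (UCE φ SL)}
    {F : UCE φ SK → UCE φ SL} (hF : IsUceFunctorMap φ SK SL UK UL f F)
    (hsurj : Surjective f) : Surjective F := by
  intro ζ
  refine UCE.induction_on (p := fun ζ => ∃ ξ, F ξ = ζ) ζ
    ⟨0, (AddMonoidHom.mk' F hF.1.1).map_zero⟩ (fun a x y => ?_) ?_
  · exact ⟨uceMk φ SK a (surjInv hsurj x) (surjInv hsurj y), by
      rw [hF.2, surjInv_eq hsurj, surjInv_eq hsurj]⟩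
  · rintro _ _ ⟨ξ, rfl⟩ ⟨ξ', rfl⟩
    exact ⟨ξ + ξ', hF.1.1 ξ ξ'⟩

theorem IsUceLift.semiconj_deriv (hf : IsHLRHom SK SL f) (hsurj : Surjective f)
    {lam : UCE φ SL →ₗ[A] K} (hlam : IsUceLift SK SL f lam) {σD : A → A} {DL : L → L}
    {DLu : UCE φ SL → UCE φ SL} (hDLu_add : ∀ ζ η, DLu (ζ + η) = DLu ζ + DLu η)
    (hDLu : ∀ a x y, DLu (uceMk φ SL a x y) = uceMk φ SL (σD a) (SL.alpha x) (SL.alpha y)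
      + uceMk φ SL (φ a) (DL x) (SL.alpha y) + uceMk φ SL (φ a) (SL.alpha x) (DL y))
    {DK : K → K} (hDK : IsAlphaDeriv φ SK DK σD) (hDKf : ∀ k, f (DK k) = DL (f k))
    : Semiconj lam DLu DK := by
  intro ζ
  refine UCE.eq_of_additive (g := fun ζ => lam (DLu ζ)) (h := fun ζ => DK (lam ζ))
    (fun _ _ => by simp only [hDLu_add, map_add]) (fun _ _ => by simp only [map_add, hDK.1])
    (fun a x y => ?_) ζ
  obtain ⟨x, rfl⟩ := hsurj x
  obtain ⟨y, rfl⟩ := hsurj y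
  simp only [hDLu, ← hf.map_alpha, ← hDKf, map_add, hlam, hDK.map_smul, hDK.map_bracket,
    SK.alpha_bracket, smul_add]
  abel

end CentralExtension

theorem statement_15_general
    {R A : Type} [CommRing R] [CommRing A] [Algebra R A] (φ : A →ₐ[R] A)
    {N K L : Type}
    [AddCommGroup N] [Module R N] [Module A N] [IsScalarTower R A N]
    [AddCommGroup K] [Module R K] [Module A K] [IsScalarTower R A K]
    [AddCommGroup L] [Module R L] [Module A L] [IsScalarTower R A L]
    (SN : HLR R A φ N) (SK : HLR R A φ K) (SL : HLR R A φ L)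
    (j : N → K) (f : K → L)
    (hce : IsCentralExt SN SK SL j f) (hap : SK.IsAlphaPerfect)
    (UK : HLR R A φ (UCE φ SK))
    (UL : HLR R A φ (UCE φ SL)) (hUL : IsUceStructure φ SL UL)
    (uK : UCE φ SK → K) (huK : IsUceMap φ SK uK)
    (F : UCE φ SK → UCE φ SL) (hF : IsUceFunctorMap φ SK SL UK UL f F)
    (P : Set (UCE φ SL)) (hP : P = F '' {ξ | uK ξ = 0})
    (DL : L → L) (σD : A → A) (hDL : IsAlphaDeriv φ SL DL σD)
    (DLu : UCE φ SL → UCE φ SL)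
    (hDLu : IsAlphaDeriv φ UL DLu σD)
    (hDLuf : ∀ (a : A) (x y : L),
      DLu (uceMk φ SL a x y) =
        uceMk φ SL (σD a) (SL.alpha x) (SL.alpha y)
          + uceMk φ SL (φ a) (DL x) (SL.alpha y)
          + uceMk φ SL (φ a) (SL.alpha x) (DL y)) :
    ((∃! DK : K → K, IsAlphaDeriv φ SK DK σD ∧ ∀ k, f (DK k) = DL (f k)) ↔
      DLu '' P ⊆ P) ∧
    (∀ DK : K → K, IsAlphaDeriv φ SK DK σD → (∀ k, f (DK k) = DL (f k)) →
      ∀ k, f k = 0 → f (DK k) = 0) := by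
  obtain ⟨-, hf, -, hsurj, -, hcent⟩ := hce
  obtain ⟨lam, hlam⟩ := exists_isUceLift hf hsurj hcent huK.bracket_self
  have hPker : P = {ζ | lam ζ = 0} := by
    have hker : {ξ | uK ξ = 0} = F ⁻¹' {ζ | lam ζ = 0} := by
      ext ξ
      rw [mem_preimage, mem_ofPred_eq, mem_ofPred_eq, hlam.comp_uceFunctorMap_apply hF huK]
    rw [hP, hker, image_preimage_eq _ (hF.surjective hsurj)]
  subst hPker
  refine ⟨⟨fun ⟨DK, ⟨hDK, hDKf⟩, _⟩ => ?_, fun hinv => ?_⟩,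
    fun DK _ hDKf k hk => by rw [hDKf, hk, hDL.map_zero]⟩
  · rintro _ ⟨ζ, hζ, rfl⟩
    show lam (DLu ζ) = 0
    rw [hlam.semiconj_deriv hf hsurj hDLu.1 hDLuf hDK hDKf, show lam ζ = 0 from hζ, hDK.map_zero]
  · obtain ⟨DK, hDK, hDKlam⟩ := hDLu.exists_descend (hlam.isHLRHom hf hsurj hUL)
      (hlam.surjective hap) fun ζ hζ => hinv ⟨ζ, hζ, rfl⟩
    have hDKf : ∀ k, f (DK k) = DL (f k) := by
      intro k
      obtain ⟨ζ, rfl⟩ := hlam.surjective hap k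
      rw [hDKlam]
      exact (hlam.isUceMap_comp hf hsurj).semiconj_deriv hDL hDLu.1 hDLuf ζ
    refine ⟨DK, ⟨hDK, hDKf⟩, fun DK' ⟨hDK', hDK'f⟩ => hDK'.eq_of_sub_mem_center hap hDK
      fun k => hcent (show f (DK' k - DK k) = 0 by rw [hf.map_sub, hDK'f, hDKf, sub_self])⟩

/-- lifting of `α`-derivations to central extensions with `α`-perfect middle
algebra: `D_L` lifts (uniquely) to an `α`-derivation `D_K` of `(K, α_K)` with the same
symbol and `f ∘ D_K = D_L ∘ f` iff `uce^φ_A(D_L)(P) ⊆ P`; any lift preserves `Ker f`. -/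
theorem statement_15
    {R A : Type} [CommRing R] [CommRing A] [Algebra R A] (φ : A →ₐ[R] A)
    (hφ : Function.Surjective ⇑φ)
    {N K L : Type}
    [AddCommGroup N] [Module R N] [Module A N] [IsScalarTower R A N]
    [AddCommGroup K] [Module R K] [Module A K] [IsScalarTower R A K]
    [AddCommGroup L] [Module R L] [Module A L] [IsScalarTower R A L]
    (SN : HLR R A φ N) (SK : HLR R A φ K) (SL : HLR R A φ L)
    (j : N → K) (f : K → L)
    (hce : IsCentralExt SN SK SL j f) (hap : SK.IsAlphaPerfect)
    (UK : HLR R A φ (UCE φ SK)) (hUK : IsUceStructure φ SK UK)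
    (UL : HLR R A φ (UCE φ SL)) (hUL : IsUceStructure φ SL UL)
    (uK : UCE φ SK → K) (huK : IsUceMap φ SK uK)
    (F : UCE φ SK → UCE φ SL) (hF : IsUceFunctorMap φ SK SL UK UL f F)
    (P : Set (UCE φ SL)) (hP : P = F '' {ξ | uK ξ = 0})
    (DL : L → L) (σD : A → A) (hDL : IsAlphaDeriv φ SL DL σD)
    (DLu : UCE φ SL → UCE φ SL)
    (hDLu : IsAlphaDeriv φ UL DLu σD)
    (hDLuf : ∀ (a : A) (x y : L),
      DLu (uceMk φ SL a x y) =
        uceMk φ SL (σD a) (SL.alpha x) (SL.alpha y)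
          + uceMk φ SL (φ a) (DL x) (SL.alpha y)
          + uceMk φ SL (φ a) (SL.alpha x) (DL y)) :
    ((∃! DK : K → K, IsAlphaDeriv φ SK DK σD ∧ ∀ k, f (DK k) = DL (f k)) ↔
      DLu '' P ⊆ P) ∧
    (∀ DK : K → K, IsAlphaDeriv φ SK DK σD → (∀ k, f (DK k) = DL (f k)) →
      ∀ k, f k = 0 → f (DK k) = 0) :=
  statement_15_general φ SN SK SL j f hce hap UK UL hUL uK huK F hF P hP DL σD hDL DLu hDLu hDLuf
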